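/- For every λ ∈ 𝔽_q that is a nonzero square (λ = t² for some t ∈ 𝔽_q^×), the diagonal 2l×2l matrix diag(1,…,1,λ,1,…,1,λ⁻¹) (with λ at index l and λ⁻¹ at index −l, and 1 at all other indices) lies in the subgroup of GL(2l,𝔽_q) generated by the D_l Chevalley generators. -/

import Mathlib

/-! With `w_α(s) = x_α(s) x_{-α}(-s⁻¹) x_α(s)`, the torus element `h_α(s) = w_α(s) w_α(-1)`
depends only on the `𝔰𝔩₂`-relations between the root vectors `e = e_α`, `f = e_{-α}`, and these
force `h_α(s) = 1 + (s - 1) e f + (s⁻¹ - 1) f e`. In `D_l`, with `a = l - 1`, `b = l`, the roots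
`α = ε_a - ε_b` and `β = ε_a + ε_b` give the diagonal matrices
`h_α(t⁻¹) = diag(t⁻¹, t, t, t⁻¹)` and `h_β(t) = diag(t, t, t⁻¹, t⁻¹)` on the indices
`a, b, -a, -b`, whose product is `diag(1, t², 1, t⁻²)`. -/

open Matrix

/-- The `D_l` Chevalley generators, as a set of invertible `2l × 2l` matrices.
Index `Sum.inl i` plays the role of `i ∈ {1,…,l}` and `Sum.inr i` of `-i`. -/
def DlGens (K : Type*) [Field K] (l : ℕ) :
    Set (Matrix (Fin l ⊕ Fin l) (Fin l ⊕ Fin l) K)ˣ :=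
  {u | ∃ t : K,
    (∃ i j : Fin l, i ≠ j ∧ (u : Matrix (Fin l ⊕ Fin l) (Fin l ⊕ Fin l) K) =
      1 + t • (Matrix.single (Sum.inl i) (Sum.inl j) (1 : K)
        - Matrix.single (Sum.inr j) (Sum.inr i) (1 : K))) ∨
    (∃ i j : Fin l, i < j ∧ (u : Matrix (Fin l ⊕ Fin l) (Fin l ⊕ Fin l) K) =
      1 + t • (Matrix.single (Sum.inl i) (Sum.inr j) (1 : K)
        - Matrix.single (Sum.inl j) (Sum.inr i) (1 : K))) ∨
    (∃ i j : Fin l, i < j ∧ (u : Matrix (Fin l ⊕ Fin l) (Fin l ⊕ Fin l) K) =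
      1 + t • (Matrix.single (Sum.inr i) (Sum.inl j) (1 : K)
        - Matrix.single (Sum.inr j) (Sum.inl i) (1 : K)))}

/-- The relations of `E₁₂` and `E₂₁` in `M₂(K)`. -/
structure IsSL2Pair {A : Type*} [Ring A] (e f : A) : Prop where
  mul_self_left : e * e = 0
  mul_self_right : f * f = 0
  mul_mul_left : e * f * e = e
  mul_mul_right : f * e * f = f

section Torus

variable {K A : Type*} [Field K] [Ring A] [Algebra K A] (e f : A)

def weylElt (s : K) : A := (1 + s • e) * (1 + (-s⁻¹) • f) * (1 + s • e)

/-- `h(s) = w(s) w(1)⁻¹`, written with `w(1)⁻¹ = w(-1)`. -/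
def torusElt (s : K) : A := weylElt e f s * weylElt e f (-1 : K)

theorem torusElt_mem {S : Submonoid A} (he : ∀ c : K, 1 + c • e ∈ S)
    (hf : ∀ c : K, 1 + c • f ∈ S) (s : K) : torusElt e f s ∈ S :=
  mul_mem (mul_mem (mul_mem (he _) (hf _)) (he _)) (mul_mem (mul_mem (he _) (hf _)) (he _))

variable {e f}

namespace IsSL2Pair

theorem weylElt_eq (h : IsSL2Pair e f) {s : K} (hs : s ≠ 0) :
    weylElt e f s = 1 - e * f - f * e + s • e - s⁻¹ • f := by
  simp only [weylElt, mul_add, add_mul, mul_one, one_mul, smul_mul_assoc, mul_smul_comm,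
    h.mul_self_left, h.mul_mul_left, smul_zero]
  match_scalars <;> simp [hs]

theorem torusElt_eq (h : IsSL2Pair e f) {s : K} (hs : s ≠ 0) :
    torusElt e f s = 1 + (s - 1) • (e * f) + (s⁻¹ - 1) • (f * e) := by
  rw [torusElt, h.weylElt_eq hs, h.weylElt_eq (neg_ne_zero.mpr one_ne_zero)]
  obtain ⟨hee, hff, hefe, hfef⟩ := h
  have hfee : f * e * e = 0 := by rw [mul_assoc, hee, mul_zero]
  have heff : e * f * f = 0 := by rw [mul_assoc, hff, mul_zero]
  simp only [mul_add, add_mul, mul_sub, sub_mul, mul_one, one_mul, smul_mul_assoc, mul_smul_comm,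
    ← mul_assoc, hee, hff, hefe, hfef, hfee, heff, zero_mul, smul_zero]
  module

end IsSL2Pair

end Torus

theorem one_add_smul_mem_map_closure {K A : Type*} [Field K] [Ring A] [Algebra K A]
    {S : Set Aˣ} {N : A} (hN : N * N = 0) {c : K} (hS : ∀ u : Aˣ, (u : A) = 1 + c • N → u ∈ S) :
    1 + c • N ∈ (Subgroup.closure S).toSubmonoid.map (Units.coeHom A) :=
  have hunit : IsUnit (1 + c • N) :=
    IsNilpotent.isUnit_one_add ⟨2, by rw [pow_two, smul_mul_smul_comm, hN, smul_zero]⟩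
  ⟨hunit.unit, Subgroup.subset_closure (hS _ hunit.unit_spec), hunit.unit_spec⟩

namespace Matrix

variable {n K : Type*} [Fintype n] [DecidableEq n] [Field K] {p q p' q' : n}

theorem single_sub_single_mul_single_sub_single (hqp' : q ≠ p') :
    (single p q (1 : K) - single q' p' 1) * (single q p 1 - single p' q' 1) =
      single p p 1 + single q' q' 1 := by
  simp [mul_sub, sub_mul, single_mul_single_of_ne, hqp', Ne.symm hqp']

theorem isSL2Pair_single_sub_single (h : [p, q, p', q'].Nodup) :
    IsSL2Pair (single p q (1 : K) - single q' p' 1) (single q p 1 - single p' q' 1) := by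
  simp only [List.nodup_cons, List.mem_cons, List.not_mem_nil, List.nodup_nil, or_false, not_or,
    not_false_eq_true, and_true] at h
  obtain ⟨⟨hpq, hpp', hpq'⟩, ⟨hqp', hqq'⟩, hp'q'⟩ := h
  constructor <;>
  simp [mul_sub, sub_mul, add_mul, single_mul_single_of_ne, hpq, hpp', hpq', hqp', hqq', hp'q',
    Ne.symm hpq, Ne.symm hpp', Ne.symm hpq', Ne.symm hqp', Ne.symm hqq', Ne.symm hp'q']

theorem torusElt_single_sub_single (h : [p, q, p', q'].Nodup) {s : K} (hs : s ≠ 0) :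
    torusElt (single p q (1 : K) - single q' p' 1) (single q p 1 - single p' q' 1) s =
      diagonal fun k => if k = p ∨ k = q' then s else if k = q ∨ k = p' then s⁻¹ else 1 := by
  rw [(isSL2Pair_single_sub_single h).torusElt_eq hs]
  simp only [List.nodup_cons, List.mem_cons, List.not_mem_nil, List.nodup_nil, or_false, not_or,
    not_false_eq_true, and_true] at h
  rw [single_sub_single_mul_single_sub_single h.2.1.1,
    single_sub_single_mul_single_sub_single h.1.2.2]
  ext i j
  simp only [add_apply, smul_apply, one_apply, single_apply, diagonal_apply, smul_eq_mul]
  by_cases hij : i = j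
  · subst hij
    by_cases hp : i = p <;> by_cases hq : i = q <;> by_cases hp' : i = p' <;>
      by_cases hq' : i = q' <;> simp_all [eq_comm]
  · have hk : ∀ k, ¬(k = i ∧ k = j) := fun k hk => hij (hk.1.symm.trans hk.2)
    simp [hij, hk]

end Matrix

theorem stmt_9_general (K : Type*) [Field K]
    (l : ℕ) (hl : 2 ≤ l) (lam t : K) (ht : t ≠ 0) (hlam : lam = t ^ 2) :
    ∃ u ∈ Subgroup.closure (DlGens K l),
      (u : Matrix (Fin l ⊕ Fin l) (Fin l ⊕ Fin l) K) =
        Matrix.diagonal (Sum.elim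
          (fun i : Fin l => if (i : ℕ) = l - 1 then lam else 1)
          (fun i : Fin l => if (i : ℕ) = l - 1 then lam⁻¹ else 1)) := by
  subst hlam
  set a : Fin l := ⟨l - 2, by omega⟩
  set b : Fin l := ⟨l - 1, by omega⟩
  have hab : a < b := by simp only [a, b, Fin.mk_lt_mk]; omega
  have gen {N : Matrix (Fin l ⊕ Fin l) (Fin l ⊕ Fin l) K} (hN : N * N = 0) {c : K}
      (hS : ∀ u : (Matrix _ _ K)ˣ, (u : Matrix _ _ K) = 1 + c • N → u ∈ DlGens K l) :
      1 + c • N ∈ (Subgroup.closure (DlGens K l)).toSubmonoid.map (Units.coeHom _) :=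
    one_add_smul_mem_map_closure hN hS
  have hαnd : [(Sum.inl a : Fin l ⊕ Fin l), .inl b, .inr a, .inr b].Nodup := by simp [hab.ne]
  have hβnd : [(Sum.inl a : Fin l ⊕ Fin l), .inr b, .inr a, .inl b].Nodup := by
    simp [hab.ne, hab.ne']
  have hα := isSL2Pair_single_sub_single (K := K) hαnd
  have hβ := isSL2Pair_single_sub_single (K := K) hβnd
  obtain ⟨u, hu, hval⟩ := mul_mem
    (torusElt_mem _ _
      (fun c => gen hβ.mul_self_left fun u hu => ⟨c, .inr (.inl ⟨a, b, hab, hu⟩)⟩)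
      (fun c => gen hβ.mul_self_right fun u hu =>
        ⟨-c, .inr (.inr ⟨a, b, hab, hu.trans (by module)⟩)⟩) t)
    (torusElt_mem _ _
      (fun c => gen hα.mul_self_left fun u hu => ⟨c, .inl ⟨a, b, hab.ne, hu⟩⟩)
      (fun c => gen hα.mul_self_right fun u hu => ⟨c, .inl ⟨b, a, hab.ne', hu⟩⟩) t⁻¹)
  rw [torusElt_single_sub_single hβnd ht, torusElt_single_sub_single hαnd (inv_ne_zero ht),
    diagonal_mul_diagonal] at hval
  refine ⟨u, hu, hval.trans (congrArg diagonal (funext fun k => ?_))⟩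
  have hb : ∀ i : Fin l, (i : ℕ) = l - 1 ↔ i = b := fun i => by simp [b, Fin.ext_iff]
  rcases k with i | i <;> by_cases hia : i = a <;> by_cases hib : i = b <;>
    simp_all [hab.ne, hab.ne'] <;> field_simp

/-- for every nonzero square `λ = t²`, `diag(1,…,1,λ,1,…,1,λ⁻¹)`
(with `λ` at index `l` and `λ⁻¹` at index `-l`) is a product of `D_l`
Chevalley generators. -/
theorem stmt_9 (K : Type*) [Field K] [Fintype K] (hchar : ringChar K ≠ 2)
    (l : ℕ) (hl : 2 ≤ l) (lam t : K) (ht : t ≠ 0) (hlam : lam = t ^ 2) :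
    ∃ u ∈ Subgroup.closure (DlGens K l),
      (u : Matrix (Fin l ⊕ Fin l) (Fin l ⊕ Fin l) K) =
        Matrix.diagonal (Sum.elim
          (fun i : Fin l => if (i : ℕ) = l - 1 then lam else 1)
          (fun i : Fin l => if (i : ℕ) = l - 1 then lam⁻¹ else 1)) :=
  stmt_9_general K l hl lam t ht hlam
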